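/- arXiv:1409.4452 — 2 statements merged into one kernel-verified Lean document; each statement's English description precedes it below -/
import Mathlib

section
/- Let $g(t)=e^{f(t)}$ be a log-concave function on $[a,b]$ with $f\in C^2$, let $t_0\in(a,b)$, $t_0>0$, be the maximizer of $f$. Let $x>0$ and $\psi>0$ satisfy $f(t_0)-f((1+x)t_0)\ge\psi$ and $(1+x)t_0\le b$. Then $\int_{(1+x)t_0}^{b} g(t)\,dt\le \frac{x\,t_0\,g(t_0)}{\psi e^{\psi}}$. -/
open MeasureTheory

theorem logconcave_tail_outer (a b : ℝ) (f : ℝ → ℝ)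
    (hconc : ConcaveOn ℝ (Set.Icc a b) f)
    (hsmooth : ContDiffOn ℝ 2 f (Set.Icc a b))
    (t₀ : ℝ) (ht₀mem : t₀ ∈ Set.Ioo a b) (ht₀pos : 0 < t₀)
    (hmax : ∀ t ∈ Set.Icc a b, f t ≤ f t₀)
    (x ψ : ℝ) (hx : 0 < x) (hψ : 0 < ψ)
    (hdrop : ψ ≤ f t₀ - f ((1 + x) * t₀))
    (hb : (1 + x) * t₀ ≤ b) :
    ∫ t in Set.Icc ((1 + x) * t₀) b, Real.exp (f t) ≤
      x * t₀ * Real.exp (f t₀) / (ψ * Real.exp ψ) := by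
  set t₁ := (1 + x) * t₀ with ht₁def
  have hxt₀ : 0 < x * t₀ := mul_pos hx ht₀pos
  have ht₀t₁ : t₀ < t₁ := by rw [ht₁def]; nlinarith
  have ha : a < t₀ := ht₀mem.1
  have ht₀ab : t₀ ∈ Set.Icc a b := ⟨ht₀mem.1.le, ht₀mem.2.le⟩
  set k := ψ / (x * t₀) with hkdef
  have hk : 0 < k := div_pos hψ hxt₀
  set c := f t₀ + ψ / x with hcdef
  have hdrop' : f t₁ ≤ f t₀ - ψ := by linarith
  -- pointwise bound
  have hbound : ∀ t ∈ Set.Icc t₁ b, f t ≤ c - k * t := by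
    intro t ht
    have ht₀t : t₀ < t := lt_of_lt_of_le ht₀t₁ ht.1
    have hden : 0 < t - t₀ := by linarith
    set lam := (t - t₁) / (t - t₀) with hlam
    set mu := (t₁ - t₀) / (t - t₀) with hmu
    have hlam0 : 0 ≤ lam := div_nonneg (by linarith [ht.1]) hden.le
    have hmu0 : 0 < mu := div_pos (by linarith) hden
    have hsum : lam + mu = 1 := by
      rw [hlam, hmu, ← add_div, div_eq_one_iff_eq hden.ne']; ring
    have hcomb : lam • t₀ + mu • t = t₁ := by
      simp only [smul_eq_mul, hlam, hmu]
      field_simp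
      ring
    have hkey := hconc.2 ht₀ab ⟨by linarith [ht.1], ht.2⟩ hlam0 hmu0.le hsum
    rw [hcomb] at hkey
    have h2 : lam * f t₀ + mu * f t ≤ f t₀ - ψ := le_trans hkey hdrop'
    -- multiply by (t - t₀)
    have h3 : (x * t₀) * f t ≤ (x * t₀) * f t₀ - ψ * (t - t₀) := by
      have hl : (t - t₀) * lam = t - t₁ := by
        rw [hlam]; field_simp
      have hm : (t - t₀) * mu = t₁ - t₀ := by
        rw [hmu]; field_simp
      calc (x * t₀) * f t
          = ((t - t₀) * lam) * f t₀ + ((t - t₀) * mu) * f t - (t - t₁) * f t₀ := by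
            rw [hl, hm, ht₁def]; ring
        _ = (t - t₀) * (lam * f t₀ + mu * f t) - (t - t₁) * f t₀ := by ring
        _ ≤ (t - t₀) * (f t₀ - ψ) - (t - t₁) * f t₀ := by
            have := mul_le_mul_of_nonneg_left h2 hden.le
            linarith
        _ = (x * t₀) * f t₀ - ψ * (t - t₀) := by rw [ht₁def]; ring
    have h4 : f t ≤ ((x * t₀) * f t₀ - ψ * (t - t₀)) / (x * t₀) := by
      rw [le_div_iff₀ hxt₀]
      linarith
    calc f t ≤ ((x * t₀) * f t₀ - ψ * (t - t₀)) / (x * t₀) := h4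
      _ = c - k * t := by
          rw [hcdef, hkdef]
          field_simp
          ring
  -- integrability
  have hsub : Set.Icc t₁ b ⊆ Set.Icc a b := Set.Icc_subset_Icc (by linarith) le_rfl
  have hcont : ContinuousOn (fun t => Real.exp (f t)) (Set.Icc t₁ b) :=
    Real.continuous_exp.comp_continuousOn (hsmooth.continuousOn.mono hsub)
  have hint : IntegrableOn (fun t => Real.exp (f t)) (Set.Icc t₁ b) :=
    hcont.integrableOn_compact isCompact_Icc
  have hcont2 : Continuous (fun t : ℝ => Real.exp (c - k * t)) := by continuity
  have hint2 : IntegrableOn (fun t => Real.exp (c - k * t)) (Set.Icc t₁ b) :=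
    hcont2.continuousOn.integrableOn_compact isCompact_Icc
  have hmono : ∫ t in Set.Icc t₁ b, Real.exp (f t)
      ≤ ∫ t in Set.Icc t₁ b, Real.exp (c - k * t) :=
    setIntegral_mono_on hint hint2 measurableSet_Icc
      (fun t ht => Real.exp_le_exp.2 (hbound t ht))
  -- compute the second integral
  have hderiv : ∀ t ∈ Set.uIcc t₁ b,
      HasDerivAt (fun s => -(Real.exp (c - k * s) / k)) (Real.exp (c - k * t)) t := by
    intro t _
    have h1 : HasDerivAt (fun s : ℝ => c - k * s) (-k) t := by
      simpa using ((hasDerivAt_id t).const_mul k).const_sub c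
    have h2 : HasDerivAt (fun s => -(Real.exp (c - k * s) / k)) (-(Real.exp (c - k * t) * -k / k)) t :=
      ((h1.exp).div_const k).neg
    convert h2 using 1
    rw [mul_neg, neg_div, neg_neg, mul_div_assoc, div_self hk.ne', mul_one]
  have heq : ∫ t in t₁..b, Real.exp (c - k * t)
      = (-(Real.exp (c - k * b) / k)) - (-(Real.exp (c - k * t₁) / k)) :=
    intervalIntegral.integral_eq_sub_of_hasDerivAt hderiv
      (hcont2.intervalIntegrable t₁ b)
  have hIcc : ∫ t in Set.Icc t₁ b, Real.exp (c - k * t)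
      = ∫ t in t₁..b, Real.exp (c - k * t) := by
    rw [MeasureTheory.integral_Icc_eq_integral_Ioc, intervalIntegral.integral_of_le hb]
  have hct₁ : c - k * t₁ = f t₀ - ψ := by
    rw [hcdef, hkdef, ht₁def]
    field_simp
    ring
  have hfinal : ∫ t in t₁..b, Real.exp (c - k * t)
      ≤ x * t₀ * Real.exp (f t₀) / (ψ * Real.exp ψ) := by
    rw [heq, hct₁]
    have hexp : 0 < Real.exp (c - k * b) := Real.exp_pos _
    have h5 : (-(Real.exp (c - k * b) / k)) - (-(Real.exp (f t₀ - ψ) / k))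
        ≤ Real.exp (f t₀ - ψ) / k := by
      have heq2 : (-(Real.exp (c - k * b) / k)) - (-(Real.exp (f t₀ - ψ) / k))
          = (Real.exp (f t₀ - ψ) - Real.exp (c - k * b)) / k := by ring
      rw [heq2]
      gcongr
      linarith
    refine le_trans h5 (le_of_eq ?_)
    rw [Real.exp_sub, hkdef]
    field_simp [hψ.ne', hxt₀.ne', Real.exp_ne_zero]
  calc ∫ t in Set.Icc t₁ b, Real.exp (f t)
      ≤ ∫ t in Set.Icc t₁ b, Real.exp (c - k * t) := hmono
    _ = ∫ t in t₁..b, Real.exp (c - k * t) := hIcc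
    _ ≤ x * t₀ * Real.exp (f t₀) / (ψ * Real.exp ψ) := hfinal
end

section
/- Let $g(t)=e^{f(t)}$ be a log-concave function on $[a,b]$ with $f\in C^2$, let $t_0>0$ be the maximizer of $f$, and let $x\in(0,1)$ and $\psi>0$ satisfy $f(t_0)-f((1-x)t_0)\ge\psi$ and $(1-x)t_0\ge a$. Then $\int_a^{(1-x)t_0} g(t)\,dt\le \frac{x\,t_0\,g(t_0)}{\psi e^{\psi}}$. -/
open MeasureTheory

theorem logconcave_tail_inner (a b : ℝ) (f : ℝ → ℝ)
    (hconc : ConcaveOn ℝ (Set.Icc a b) f)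
    (hsmooth : ContDiffOn ℝ 2 f (Set.Icc a b))
    (t₀ : ℝ) (ht₀mem : t₀ ∈ Set.Ioo a b) (ht₀pos : 0 < t₀)
    (hmax : ∀ t ∈ Set.Icc a b, f t ≤ f t₀)
    (x ψ : ℝ) (hx : x ∈ Set.Ioo (0:ℝ) 1) (hψ : 0 < ψ)
    (hdrop : ψ ≤ f t₀ - f ((1 - x) * t₀))
    (ha : a ≤ (1 - x) * t₀) :
    ∫ t in Set.Icc a ((1 - x) * t₀), Real.exp (f t) ≤
      x * t₀ * Real.exp (f t₀) / (ψ * Real.exp ψ) := by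
  obtain ⟨hx0, hx1⟩ := hx
  set s := (1 - x) * t₀ with hs
  have hxt : 0 < x * t₀ := mul_pos hx0 ht₀pos
  have hst : s < t₀ := by nlinarith
  have hsb : s ≤ b := (hst.trans ht₀mem.2).le
  set c := ψ / (x * t₀) with hc
  have hcpos : 0 < c := div_pos hψ hxt
  have key : ∀ t ∈ Set.Icc a s, f t ≤ f t₀ - c * (t₀ - t) := by
    intro t ht
    have htlt : t < t₀ := lt_of_le_of_lt ht.2 hst
    have hden : 0 < t₀ - t := by linarith
    set lam := (x * t₀) / (t₀ - t) with hlam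
    set mu := (s - t) / (t₀ - t) with hmu
    have hlampos : 0 < lam := div_pos hxt hden
    have hmunn : 0 ≤ mu := div_nonneg (by linarith [ht.2]) hden.le
    have hsum : lam + mu = 1 := by
      rw [hlam, hmu, ← add_div, hs]
      field_simp
      ring
    have hcomb : lam • t + mu • t₀ = s := by
      rw [smul_eq_mul, smul_eq_mul, hlam, hmu]
      field_simp
      rw [hs]; ring
    have htm : t ∈ Set.Icc a b := ⟨ht.1, le_trans ht.2 hsb⟩
    have ht0m : t₀ ∈ Set.Icc a b := ⟨ht₀mem.1.le, ht₀mem.2.le⟩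
    have hcc := hconc.2 htm ht0m hlampos.le hmunn hsum
    rw [hcomb] at hcc
    simp only [smul_eq_mul] at hcc
    have hmu' : mu = 1 - lam := by linarith
    have hcc' : lam * f t + (1 - lam) * f t₀ ≤ f t₀ - ψ := by
      rw [← hmu']; linarith
    have h1 : ψ ≤ lam * (f t₀ - f t) := by nlinarith [hcc']
    have h2 : ψ * (t₀ - t) ≤ x * t₀ * (f t₀ - f t) := by
      rw [hlam, div_mul_eq_mul_div] at h1
      have := (le_div_iff₀ hden).mp h1
      nlinarith [this]
    rw [hc, div_mul_eq_mul_div]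
    have h3 : ψ * (t₀ - t) / (x * t₀) ≤ f t₀ - f t := by
      rw [div_le_iff₀ hxt]
      nlinarith [h2]
    linarith
  have hcontf : ContinuousOn f (Set.Icc a s) :=
    (hsmooth.continuousOn).mono (Set.Icc_subset_Icc le_rfl hsb)
  have hint1 : IntegrableOn (fun t => Real.exp (f t)) (Set.Icc a s) :=
    (Real.continuous_exp.comp_continuousOn hcontf).integrableOn_compact isCompact_Icc
  have hcontg : Continuous (fun t : ℝ => Real.exp (f t₀ - c * (t₀ - t))) := by
    continuity
  have hint2 : IntegrableOn (fun t => Real.exp (f t₀ - c * (t₀ - t))) (Set.Icc a s) :=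
    hcontg.continuousOn.integrableOn_compact isCompact_Icc
  have hmono : ∫ t in Set.Icc a s, Real.exp (f t)
      ≤ ∫ t in Set.Icc a s, Real.exp (f t₀ - c * (t₀ - t)) :=
    setIntegral_mono_on hint1 hint2 measurableSet_Icc
      (fun t ht => Real.exp_le_exp.2 (key t ht))
  have heq : ∫ t in Set.Icc a s, Real.exp (f t₀ - c * (t₀ - t))
      = ∫ t in a..s, Real.exp (f t₀ - c * (t₀ - t)) := by
    rw [MeasureTheory.integral_Icc_eq_integral_Ioc, intervalIntegral.integral_of_le ha]
  have hderiv : ∀ t ∈ Set.uIcc a s,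
      HasDerivAt (fun u => Real.exp (f t₀ - c * (t₀ - u)) / c)
        (Real.exp (f t₀ - c * (t₀ - t))) t := by
    intro t _
    have h0 : HasDerivAt (fun u : ℝ => f t₀ - c * t₀ + c * u) c t := by
      simpa using ((hasDerivAt_id t).const_mul c).const_add (f t₀ - c * t₀)
    have h1 : HasDerivAt (fun u : ℝ => f t₀ - c * (t₀ - u)) c t :=
      h0.congr_of_eventuallyEq (Filter.Eventually.of_forall fun u => by ring)
    have h2 := h1.exp.div_const c
    simpa [mul_div_assoc, mul_div_cancel_right₀, hcpos.ne'] using h2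
  have hval : ∫ t in a..s, Real.exp (f t₀ - c * (t₀ - t))
      = Real.exp (f t₀ - c * (t₀ - s)) / c - Real.exp (f t₀ - c * (t₀ - a)) / c := by
    exact intervalIntegral.integral_eq_sub_of_hasDerivAt hderiv
      (hcontg.intervalIntegrable a s)
  have hcs : c * (t₀ - s) = ψ := by
    have hxs : t₀ - s = x * t₀ := by rw [hs]; ring
    rw [hc, hxs, div_mul_cancel₀ _ hxt.ne']
  have hrhs : Real.exp (f t₀ - ψ) / c = x * t₀ * Real.exp (f t₀) / (ψ * Real.exp ψ) := by
    rw [hc, Real.exp_sub, div_div]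
    rw [div_eq_div_iff (mul_pos (Real.exp_pos _) (div_pos hψ hxt)).ne'
      (mul_pos hψ (Real.exp_pos _)).ne']
    field_simp
  calc ∫ t in Set.Icc a s, Real.exp (f t)
      ≤ ∫ t in a..s, Real.exp (f t₀ - c * (t₀ - t)) := heq ▸ hmono
    _ = Real.exp (f t₀ - c * (t₀ - s)) / c - Real.exp (f t₀ - c * (t₀ - a)) / c := hval
    _ ≤ Real.exp (f t₀ - ψ) / c := by
        rw [hcs]
        have : 0 ≤ Real.exp (f t₀ - c * (t₀ - a)) / c :=
          div_nonneg (Real.exp_pos _).le hcpos.le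
        linarith
    _ = x * t₀ * Real.exp (f t₀) / (ψ * Real.exp ψ) := hrhs
end
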